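/- arXiv:1905.09504 — 4 statements merged into one kernel-verified Lean document; each statement's English description precedes it below -/
import Mathlib

section
/- Maximum principle for the heat equation on a metric graph: let O be a precompact connected open subset of a metric graph and u : [0,T] × closure(O) → ℝ be continuous, differentiable in t on (0,T), smooth in x on each open edge, satisfying Kirchhoff's law at interior vertices, and Δu - ∂u/∂t ≥ 0 on (0,T) × O. Then the maximum of u over [0,T] × closure(O) is attained on the parabolic boundary ([0,T] × ∂O) ∪ ({0} × closure(O)). -/
/-!
Perturb `u` to `F = u - 3εt + ε s (ℓₑ - s)`. The bump `s (ℓₑ - s)` vanishes at the vertices, raises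
every outgoing and lowers every incoming edge derivative at a vertex by `ε ℓₑ`, and together with
`-3εt` gives `F_ss - F_t ≥ ε`: `F` satisfies Kirchhoff's law and the heat inequality strictly.
A maximum of `F` over `[0, T'] ×` graph, `T' < T`, can then neither lie inside an edge at a positive
time (there `F_t ≥ 0 ≥ F_ss`) nor at a vertex off the boundary (there all outgoing derivatives are
`≤ 0` and all incoming ones `≥ 0`), so it lies on the parabolic boundary. Hence, on `[0, T']`,
`u ≤ max u|parabolic boundary + ε (∑ ℓₑ² + 3T)`; let `ε → 0`, and use continuity at `T`.
-/

open Set Filter Topology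

theorem IsMaxOn.hasDerivWithinAt_Icc_left_nonpos {f : ℝ → ℝ} {a b d : ℝ} (hab : a < b)
    (hmax : IsMaxOn f (Icc a b) a) (hd : HasDerivWithinAt f d (Icc a b) a) : d ≤ 0 := by
  have hcone : b - a ∈ posTangentConeAt (Icc a b) a :=
    sub_mem_posTangentConeAt_of_segment_subset (segment_eq_Icc hab.le).subset
  have := hmax.localize.hasFDerivWithinAt_nonpos hd.hasFDerivWithinAt hcone
  rw [ContinuousLinearMap.toSpanSingleton_apply, smul_eq_mul] at this
  nlinarith

theorem IsMaxOn.hasDerivWithinAt_Icc_right_nonneg {f : ℝ → ℝ} {a b d : ℝ} (hab : a < b)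
    (hmax : IsMaxOn f (Icc a b) b) (hd : HasDerivWithinAt f d (Icc a b) b) : 0 ≤ d := by
  have hcone : a - b ∈ posTangentConeAt (Icc a b) b :=
    sub_mem_posTangentConeAt_of_segment_subset (by rw [segment_symm, segment_eq_Icc hab.le])
  have := hmax.localize.hasFDerivWithinAt_nonpos hd.hasFDerivWithinAt hcone
  rw [ContinuousLinearMap.toSpanSingleton_apply, smul_eq_mul] at this
  nlinarith

theorem IsLocalMax.nonpos_of_hasDerivAt_deriv {f f' : ℝ → ℝ} {x d : ℝ} (h : IsLocalMax f x)
    (hf : ∀ᶠ y in 𝓝 x, HasDerivAt f (f' y) y) (hf' : HasDerivAt f' d x) : d ≤ 0 := by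
  by_contra! hd
  have hx : f' x = 0 := h.hasDerivAt_eq_zero hf.self_of_nhds
  have hpos : ∀ᶠ y in 𝓝[>] x, 0 < f' y := by
    have hslope := (hasDerivAt_iff_tendsto_slope.1 hf').mono_left (nhdsGT_le_nhdsNE x)
    filter_upwards [hslope.eventually (eventually_gt_nhds hd), self_mem_nhdsWithin]
      with y hy hxy using pos_of_slope_pos hxy hy hx
  obtain ⟨b, hxb : x < b, hb⟩ := mem_nhdsGT_iff_exists_Ioo_subset.1
    (hpos.and ((hf.filter_mono nhdsWithin_le_nhds).and (h.filter_mono nhdsWithin_le_nhds)))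
  have hmono : StrictMonoOn f (Ico x b) := by
    refine strictMonoOn_of_hasDerivWithinAt_pos (convex_Ico x b) (f' := f') (fun y hy => ?_)
      (fun y hy => ?_) (fun y hy => ?_)
    · rcases hy.1.eq_or_lt with rfl | hxy
      · exact hf.self_of_nhds.continuousAt.continuousWithinAt
      · exact (hb ⟨hxy, hy.2⟩).2.1.continuousAt.continuousWithinAt
    · rw [interior_Ico] at hy ⊢
      exact (hb hy).2.1.hasDerivWithinAt
    · rw [interior_Ico] at hy
      exact (hb hy).1
  have hmid : (x + b) / 2 ∈ Ioo x b := ⟨by linarith, by linarith⟩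
  exact (hmono (left_mem_Ico.2 hxb) (Ioo_subset_Ico_self hmid) hmid.1).not_ge (hb hmid).2.2

theorem exists_forall_le_of_isCompact_of_finite {ι X : Type*} [TopologicalSpace X] [Finite ι]
    [Nonempty ι] {K : ι → Set X} (hK : ∀ i, IsCompact (K i)) (hne : ∀ i, (K i).Nonempty)
    {f : ι → X → ℝ} (hf : ∀ i, ContinuousOn (f i) (K i)) :
    ∃ i₀, ∃ x₀ ∈ K i₀, ∀ i, ∀ x ∈ K i, f i x ≤ f i₀ x₀ := by
  obtain ⟨i⟩ := ‹Nonempty ι›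
  obtain ⟨m, hm, hmax⟩ :=
    (isCompact_iUnion fun i => (hK i).image_of_continuousOn (hf i)).exists_isGreatest
      (((hne i).image (f i)).mono (subset_iUnion (fun i => f i '' K i) i))
  obtain ⟨i₀, x₀, hx₀, rfl⟩ := mem_iUnion.1 hm
  exact ⟨i₀, x₀, hx₀, fun i x hx => hmax (mem_iUnion.2 ⟨i, mem_image_of_mem _ hx⟩)⟩

/-- The part of the parabolic boundary in the space-time rectangle `[0, T] × [0, a]` of an edge;
`l` and `r` say whether the initial and the terminal vertex of the edge lie in the boundary. -/
def parabolicBoundary (T a : ℝ) (l r : Prop) : Set (ℝ × ℝ) :=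
  {q ∈ Icc 0 T ×ˢ Icc 0 a | q.1 = 0 ∨ (q.2 = 0 ∧ l) ∨ (q.2 = a ∧ r)}

theorem isCompact_parabolicBoundary (T a : ℝ) (l r : Prop) :
    IsCompact (parabolicBoundary T a l r) :=
  (isCompact_Icc.prod isCompact_Icc).inter_right <|
    (isClosed_eq continuous_fst continuous_const).union <|
      ((isClosed_eq continuous_snd continuous_const).inter isClosed_const).union
        ((isClosed_eq continuous_snd continuous_const).inter isClosed_const)

theorem zero_mem_parabolicBoundary {T a : ℝ} (hT : 0 ≤ T) (ha : 0 ≤ a) (l r : Prop) :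
    (0, 0) ∈ parabolicBoundary T a l r :=
  ⟨⟨⟨le_rfl, hT⟩, ⟨le_rfl, ha⟩⟩, Or.inl rfl⟩

theorem parabolicBoundary_mono {T T' : ℝ} (h : T' ≤ T) (a : ℝ) (l r : Prop) :
    parabolicBoundary T' a l r ⊆ parabolicBoundary T a l r :=
  fun _ ⟨hq, hb⟩ => ⟨prod_mono (Icc_subset_Icc_right h) Subset.rfl hq, hb⟩

section MetricGraph

variable {E V : Type*} [Fintype E] [DecidableEq V] {ι τ : E → V} {len : E → ℝ} {T : ℝ}
  {Vb : Set V}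

theorem sum_out_le_sum_in_of_isMaxOn_vertex (hlen : ∀ e, 0 < len e) {f f' : E → ℝ → ℝ}
    (hf : ∀ e, ∀ s ∈ Icc 0 (len e), HasDerivWithinAt (f e) (f' e s) (Icc 0 (len e)) s)
    {v : V} {c : ℝ} (hι : ∀ e, ι e = v → f e 0 = c) (hτ : ∀ e, τ e = v → f e (len e) = c)
    (hmax : ∀ e, ∀ s ∈ Icc 0 (len e), f e s ≤ c) :
    ∑ e ∈ Finset.univ.filter fun e => ι e = v, f' e 0
      ≤ ∑ e ∈ Finset.univ.filter fun e => τ e = v, f' e (len e) := by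
  refine (Finset.sum_nonpos fun e he => ?_).trans (Finset.sum_nonneg fun e he => ?_)
  · have hv := (Finset.mem_filter.1 he).2
    exact IsMaxOn.hasDerivWithinAt_Icc_left_nonpos (hlen e)
      (fun s hs => (hmax e s hs).trans_eq (hι e hv).symm) (hf e 0 (left_mem_Icc.2 (hlen e).le))
  · have hv := (Finset.mem_filter.1 he).2
    exact IsMaxOn.hasDerivWithinAt_Icc_right_nonneg (hlen e)
      (fun s hs => (hmax e s hs).trans_eq (hτ e hv).symm)
      (hf e (len e) (right_mem_Icc.2 (hlen e).le))

theorem mem_parabolicBoundary_of_isMax_of_strict (hlen : ∀ e, 0 < len e)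
    {F Ft Fs Fss : ℝ → E → ℝ → ℝ} {FV : ℝ → V → ℝ}
    (hcompat : ∀ t e, F t e 0 = FV t (ι e) ∧ F t e (len e) = FV t (τ e))
    (hFt : ∀ e, ∀ t ∈ Ioc 0 T, ∀ s ∈ Ioo 0 (len e), HasDerivAt (F · e s) (Ft t e s) t)
    (hFs : ∀ e, ∀ t ∈ Ioc 0 T, ∀ s ∈ Icc 0 (len e),
      HasDerivWithinAt (F t e) (Fs t e s) (Icc 0 (len e)) s)
    (hFss : ∀ e, ∀ t ∈ Ioc 0 T, ∀ s ∈ Ioo 0 (len e), HasDerivAt (Fs t e) (Fss t e s) s)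
    (hkirch : ∀ t ∈ Ioc 0 T, ∀ v, v ∉ Vb →
      ∑ e ∈ Finset.univ.filter fun e => τ e = v, Fs t e (len e)
        < ∑ e ∈ Finset.univ.filter fun e => ι e = v, Fs t e 0)
    (hheat : ∀ e, ∀ t ∈ Ioc 0 T, ∀ s ∈ Ioo 0 (len e), Ft t e s < Fss t e s)
    {t₀ s₀ : ℝ} {e₀ : E} (ht₀ : t₀ ∈ Icc 0 T) (hs₀ : s₀ ∈ Icc 0 (len e₀))
    (hmax : ∀ t ∈ Icc 0 T, ∀ e, ∀ s ∈ Icc 0 (len e), F t e s ≤ F t₀ e₀ s₀) :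
    (t₀, s₀) ∈ parabolicBoundary T (len e₀) (ι e₀ ∈ Vb) (τ e₀ ∈ Vb) := by
  refine ⟨⟨ht₀, hs₀⟩, ?_⟩
  rcases ht₀.1.eq_or_lt with h0 | ht₀pos
  · exact Or.inl h0.symm
  have ht : t₀ ∈ Ioc 0 T := ⟨ht₀pos, ht₀.2⟩
  have hvertex : ∀ v, FV t₀ v = F t₀ e₀ s₀ → v ∈ Vb := by
    intro v hv
    by_contra hVb
    refine (hkirch t₀ ht v hVb).not_ge (sum_out_le_sum_in_of_isMaxOn_vertex hlen (hFs · t₀ ht)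
      (fun e he => ?_) (fun e he => ?_) (hmax t₀ ht₀))
    · rw [(hcompat t₀ e).1, he, hv]
    · rw [(hcompat t₀ e).2, he, hv]
  rcases hs₀.1.eq_or_lt with h0 | hs₀pos
  · exact Or.inr (Or.inl ⟨h0.symm, hvertex _ (by rw [← (hcompat t₀ e₀).1, h0])⟩)
  rcases hs₀.2.eq_or_lt with hl | hs₀lt
  · exact Or.inr (Or.inr ⟨hl, hvertex _ (by rw [← (hcompat t₀ e₀).2, hl])⟩)
  have hs : s₀ ∈ Ioo 0 (len e₀) := ⟨hs₀pos, hs₀lt⟩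
  have htime : 0 ≤ Ft t₀ e₀ s₀ :=
    IsMaxOn.hasDerivWithinAt_Icc_right_nonneg ht₀pos
      (fun t ht => hmax t ⟨ht.1, ht.2.trans ht₀.2⟩ e₀ s₀ hs₀)
      (hFt e₀ t₀ ht s₀ hs).hasDerivWithinAt
  have hspace : Fss t₀ e₀ s₀ ≤ 0 := by
    refine IsLocalMax.nonpos_of_hasDerivAt_deriv (f := F t₀ e₀)
      (mem_of_superset (Icc_mem_nhds hs₀pos hs₀lt) fun s hs => hmax t₀ ht₀ e₀ s hs) ?_
      (hFss e₀ t₀ ht s₀ hs)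
    filter_upwards [Ioo_mem_nhds hs₀pos hs₀lt] with s hs
    exact (hFs e₀ t₀ ht s (Ioo_subset_Icc_self hs)).hasDerivAt (Icc_mem_nhds hs.1 hs.2)
  exact absurd (hheat e₀ t₀ ht s₀ hs) (by linarith)

theorem sum_sub_lt_sum_add_of_kirchhoff (hlen : ∀ e, 0 < len e) {v : V}
    (hv : ∃ e, ι e = v ∨ τ e = v) {a b : E → ℝ}
    (hab : ∑ e ∈ Finset.univ.filter fun e => ι e = v, a e
      = ∑ e ∈ Finset.univ.filter fun e => τ e = v, b e) {ε : ℝ} (hε : 0 < ε) :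
    ∑ e ∈ Finset.univ.filter fun e => τ e = v, (b e - ε * len e)
      < ∑ e ∈ Finset.univ.filter fun e => ι e = v, (a e + ε * len e) := by
  have hout := Finset.sum_nonneg (s := Finset.univ.filter fun e => ι e = v)
    fun e _ => (hlen e).le
  have hin := Finset.sum_nonneg (s := Finset.univ.filter fun e => τ e = v)
    fun e _ => (hlen e).le
  have hpos : 0 < ∑ e ∈ Finset.univ.filter fun e => ι e = v, len e
      + ∑ e ∈ Finset.univ.filter fun e => τ e = v, len e := by
    obtain ⟨e, he | he⟩ := hv
    · exact add_pos_of_pos_of_nonneg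
        (Finset.sum_pos' (fun e _ => (hlen e).le) ⟨e, by simp [he], hlen e⟩) hin
    · exact add_pos_of_nonneg_of_pos hout
        (Finset.sum_pos' (fun e _ => (hlen e).le) ⟨e, by simp [he], hlen e⟩)
  rw [Finset.sum_sub_distrib, Finset.sum_add_distrib, ← Finset.mul_sum, ← Finset.mul_sum, hab]
  nlinarith

variable {u : ℝ → E → ℝ → ℝ} {uV : ℝ → V → ℝ} {ut us uss : ℝ → E → ℝ → ℝ}

variable (ι τ len T Vb u uV ut us uss) in
structure IsHeatSubsolution : Prop where
  compat : ∀ t e, u t e 0 = uV t (ι e) ∧ u t e (len e) = uV t (τ e)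
  continuousOn : ∀ e, ContinuousOn (fun q : ℝ × ℝ => u q.1 e q.2) (Icc 0 T ×ˢ Icc 0 (len e))
  hasDerivAt_time : ∀ e, ∀ t ∈ Ioo 0 T, ∀ s ∈ Icc 0 (len e),
    HasDerivAt (fun t' => u t' e s) (ut t e s) t
  hasDerivWithinAt_space : ∀ e, ∀ t ∈ Ioo 0 T, ∀ s ∈ Icc 0 (len e),
    HasDerivWithinAt (fun σ => u t e σ) (us t e s) (Icc 0 (len e)) s
  hasDerivWithinAt_space_space : ∀ e, ∀ t ∈ Ioo 0 T, ∀ s ∈ Ioo 0 (len e),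
    HasDerivWithinAt (fun σ => us t e σ) (uss t e s) (Ioo 0 (len e)) s
  kirchhoff : ∀ t ∈ Ioo 0 T, ∀ v, v ∉ Vb →
    (∑ e ∈ Finset.univ.filter fun e => ι e = v, us t e 0)
      = ∑ e ∈ Finset.univ.filter fun e => τ e = v, us t e (len e)
  heat : ∀ e, ∀ t ∈ Ioo 0 T, ∀ s ∈ Ioo 0 (len e), 0 ≤ uss t e s - ut t e s

theorem hasDerivAt_id_mul_const_sub (a s : ℝ) :
    HasDerivAt (fun s => s * (a - s)) (a - 2 * s) s :=
  ((hasDerivAt_id' s).fun_mul ((hasDerivAt_const s a).fun_sub (hasDerivAt_id' s))).congr_deriv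
    (by ring)

theorem exists_isMax_perturbation_mem_parabolicBoundary [Nonempty E] (hlen : ∀ e, 0 < len e)
    (hincident : ∀ v, v ∉ Vb → ∃ e, ι e = v ∨ τ e = v)
    (hu : IsHeatSubsolution ι τ len T Vb u uV ut us uss) {ε : ℝ} (hε : 0 < ε) {T' : ℝ}
    (hT' : T' ∈ Ico 0 T) :
    ∃ e₀ t₀ s₀, (t₀, s₀) ∈ parabolicBoundary T' (len e₀) (ι e₀ ∈ Vb) (τ e₀ ∈ Vb) ∧
      ∀ t ∈ Icc 0 T', ∀ e, ∀ s ∈ Icc 0 (len e),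
        u t e s - 3 * ε * t + ε * (s * (len e - s))
          ≤ u t₀ e₀ s₀ - 3 * ε * t₀ + ε * (s₀ * (len e₀ - s₀)) := by
  set F : ℝ → E → ℝ → ℝ := fun t e s => u t e s - 3 * ε * t + ε * (s * (len e - s)) with hF
  have hIoc : Ioc 0 T' ⊆ Ioo 0 T := fun t ht => ⟨ht.1, ht.2.trans_lt hT'.2⟩
  have hFt : ∀ e, ∀ t ∈ Ioc 0 T', ∀ s ∈ Ioo 0 (len e),
      HasDerivAt (F · e s) (ut t e s - 3 * ε) t := fun e t ht s hs =>
    (((hu.hasDerivAt_time e t (hIoc ht) s (Ioo_subset_Icc_self hs)).sub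
      ((hasDerivAt_id t).const_mul (3 * ε))).add_const _).congr_deriv (by simp)
  have hFs : ∀ e, ∀ t ∈ Ioc 0 T', ∀ s ∈ Icc 0 (len e), HasDerivWithinAt (F t e)
      (us t e s + ε * (len e - 2 * s)) (Icc 0 (len e)) s := fun e t ht s hs =>
    ((hu.hasDerivWithinAt_space e t (hIoc ht) s hs).sub_const (3 * ε * t)).fun_add
      ((hasDerivAt_id_mul_const_sub (len e) s).const_mul ε).hasDerivWithinAt
  have hFss : ∀ e, ∀ t ∈ Ioc 0 T', ∀ s ∈ Ioo 0 (len e),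
      HasDerivAt (fun s => us t e s + ε * (len e - 2 * s)) (uss t e s - 2 * ε) s :=
    fun e t ht s hs =>
      (((hu.hasDerivWithinAt_space_space e t (hIoc ht) s hs).hasDerivAt
        (Ioo_mem_nhds hs.1 hs.2)).add
          ((((hasDerivAt_id s).const_mul 2).const_sub (len e)).const_mul ε)).congr_deriv
        (by simp; ring)
  have hkirchF : ∀ t ∈ Ioc 0 T', ∀ v, v ∉ Vb →
      ∑ e ∈ Finset.univ.filter fun e => τ e = v, (us t e (len e) + ε * (len e - 2 * len e))
        < ∑ e ∈ Finset.univ.filter fun e => ι e = v, (us t e 0 + ε * (len e - 2 * 0)) := by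
    intro t ht v hv
    simpa only [two_mul, sub_add_cancel_left, mul_neg, ← sub_eq_add_neg, mul_zero, sub_zero]
      using sum_sub_lt_sum_add_of_kirchhoff hlen (hincident v hv)
        (hu.kirchhoff t (hIoc ht) v hv) hε
  obtain ⟨e₀, ⟨t₀, s₀⟩, hq₀, hmax⟩ := exists_forall_le_of_isCompact_of_finite
    (K := fun e => Icc 0 T' ×ˢ Icc 0 (len e)) (f := fun e q => F q.1 e q.2)
    (fun e => isCompact_Icc.prod isCompact_Icc)
    (fun e => ⟨(0, 0), ⟨le_rfl, hT'.1⟩, ⟨le_rfl, (hlen e).le⟩⟩)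
    (fun e => (((hu.continuousOn e).mono
      (prod_mono (Icc_subset_Icc_right hT'.2.le) Subset.rfl)).sub (by fun_prop)).add
        (by fun_prop))
  have hmax' : ∀ t ∈ Icc 0 T', ∀ e, ∀ s ∈ Icc 0 (len e), F t e s ≤ F t₀ e₀ s₀ :=
    fun t ht e s hs => hmax e (t, s) ⟨ht, hs⟩
  refine ⟨e₀, t₀, s₀, ?_, hmax'⟩
  exact mem_parabolicBoundary_of_isMax_of_strict (FV := fun t v => uV t v - 3 * ε * t) hlen
    (fun t e => by simp [hF, hu.compat]) hFt hFs hFss hkirchF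
    (fun e t ht s hs => by linarith [hu.heat e t (hIoc ht) s hs]) hq₀.1 hq₀.2 hmax'

theorem le_add_mul_of_parabolicBoundary_le [Nonempty E] (hlen : ∀ e, 0 < len e)
    (hincident : ∀ v, v ∉ Vb → ∃ e, ι e = v ∨ τ e = v)
    (hu : IsHeatSubsolution ι τ len T Vb u uV ut us uss) {M : ℝ}
    (hM : ∀ e, ∀ q ∈ parabolicBoundary T (len e) (ι e ∈ Vb) (τ e ∈ Vb), u q.1 e q.2 ≤ M)
    {ε : ℝ} (hε : 0 < ε) {T' : ℝ} (hT' : T' ∈ Ico 0 T) :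
    ∀ t ∈ Icc 0 T', ∀ e, ∀ s ∈ Icc 0 (len e), u t e s ≤ M + ε * (∑ e, len e ^ 2 + 3 * T) := by
  obtain ⟨e₀, t₀, s₀, hq₀, hmax⟩ :=
    exists_isMax_perturbation_mem_parabolicBoundary hlen hincident hu hε hT'
  have hu₀ : u t₀ e₀ s₀ ≤ M := hM e₀ (t₀, s₀) (parabolicBoundary_mono hT'.2.le _ _ _ hq₀)
  have hbump₀ : ε * (s₀ * (len e₀ - s₀)) ≤ ε * ∑ e, len e ^ 2 := by
    refine mul_le_mul_of_nonneg_left ?_ hε.le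
    refine le_trans ?_
      (Finset.single_le_sum (fun e _ => sq_nonneg (len e)) (Finset.mem_univ e₀))
    nlinarith [hq₀.1.2.1, hq₀.1.2.2]
  intro t ht e s hs
  have hbump : 0 ≤ ε * (s * (len e - s)) :=
    mul_nonneg hε.le (mul_nonneg hs.1 (sub_nonneg.2 hs.2))
  nlinarith [hmax t ht e s hs, hq₀.1.1.1, ht.2.trans hT'.2.le]

theorem le_of_parabolicBoundary_le [Nonempty E] (hlen : ∀ e, 0 < len e) (hT : 0 < T)
    (hincident : ∀ v, v ∉ Vb → ∃ e, ι e = v ∨ τ e = v)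
    (hu : IsHeatSubsolution ι τ len T Vb u uV ut us uss) {M : ℝ}
    (hM : ∀ e, ∀ q ∈ parabolicBoundary T (len e) (ι e ∈ Vb) (τ e ∈ Vb), u q.1 e q.2 ≤ M) :
    ∀ t ∈ Icc 0 T, ∀ e, ∀ s ∈ Icc 0 (len e), u t e s ≤ M := by
  have hC : 0 < ∑ e, len e ^ 2 + 3 * T := by positivity
  have hbefore : ∀ t ∈ Ico 0 T, ∀ e, ∀ s ∈ Icc 0 (len e), u t e s ≤ M := by
    intro t ht e s hs
    refine le_of_forall_pos_le_add fun δ hδ => ?_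
    have := le_add_mul_of_parabolicBoundary_le hlen hincident hu hM (div_pos hδ hC) ht
      t ⟨ht.1, le_rfl⟩ e s hs
    rwa [div_mul_cancel₀ _ hC.ne'] at this
  intro t ht e s hs
  have hslice : ContinuousOn (fun t => u t e s) (Icc 0 T) :=
    (hu.continuousOn e).comp (continuous_id.prodMk continuous_const).continuousOn
      fun t ht => ⟨ht, hs⟩
  exact ContinuousWithinAt.closure_le (f := fun t => u t e s) (g := fun _ => M)
    (by rwa [closure_Ico hT.ne]) ((hslice t ht).mono Ico_subset_Icc_self)
    continuousWithinAt_const fun t' ht' => hbefore t' ht' e s hs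

end MetricGraph

theorem stmt5_general
    (E V : Type) [Fintype E] [Nonempty E] [DecidableEq V]
    (ι τ : E → V) (len : E → ℝ) (hlen : ∀ e, 0 < len e)
    (T : ℝ) (hT : 0 < T)
    (Vb : Set V)
    (hincident : ∀ v, v ∉ Vb → ∃ e, ι e = v ∨ τ e = v)
    (u : ℝ → E → ℝ → ℝ) (uV : ℝ → V → ℝ)
    (hcompat : ∀ t e, u t e 0 = uV t (ι e) ∧ u t e (len e) = uV t (τ e))
    (hcont : ∀ e, ContinuousOn (fun q : ℝ × ℝ => u q.1 e q.2)
      (Set.Icc 0 T ×ˢ Set.Icc 0 (len e)))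
    (ut us uss : ℝ → E → ℝ → ℝ)
    (hut : ∀ e, ∀ t ∈ Set.Ioo 0 T, ∀ s ∈ Set.Icc 0 (len e),
      HasDerivAt (fun t' => u t' e s) (ut t e s) t)
    (hus : ∀ e, ∀ t ∈ Set.Ioo 0 T, ∀ s ∈ Set.Icc 0 (len e),
      HasDerivWithinAt (fun σ => u t e σ) (us t e s) (Set.Icc 0 (len e)) s)
    (huss : ∀ e, ∀ t ∈ Set.Ioo 0 T, ∀ s ∈ Set.Ioo 0 (len e),
      HasDerivWithinAt (fun σ => us t e σ) (uss t e s) (Set.Ioo 0 (len e)) s)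
    (hkirch : ∀ t ∈ Set.Ioo 0 T, ∀ v, v ∉ Vb →
      (∑ e ∈ Finset.univ.filter fun e => ι e = v, us t e 0)
        = ∑ e ∈ Finset.univ.filter fun e => τ e = v, us t e (len e))
    (hheat : ∀ e, ∀ t ∈ Set.Ioo 0 T, ∀ s ∈ Set.Ioo 0 (len e), 0 ≤ uss t e s - ut t e s) :
    ∃ M : ℝ,
      ((∃ e, ∃ s ∈ Set.Icc 0 (len e), M = u 0 e s) ∨
        (∃ v ∈ Vb, ∃ t ∈ Set.Icc 0 T, M = uV t v)) ∧
      ∀ t ∈ Set.Icc 0 T, ∀ e, ∀ s ∈ Set.Icc 0 (len e), u t e s ≤ M := by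
  obtain ⟨e₀, ⟨t₀, s₀⟩, hq₀, hmax⟩ := exists_forall_le_of_isCompact_of_finite
    (K := fun e => parabolicBoundary T (len e) (ι e ∈ Vb) (τ e ∈ Vb))
    (f := fun e q => u q.1 e q.2) (fun e => isCompact_parabolicBoundary _ _ _ _)
    (fun e => ⟨_, zero_mem_parabolicBoundary hT.le (hlen e).le _ _⟩)
    (fun e => (hcont e).mono fun q hq => hq.1)
  refine ⟨u t₀ e₀ s₀, ?_, le_of_parabolicBoundary_le hlen hT hincident
    ⟨hcompat, hcont, hut, hus, huss, hkirch, hheat⟩ hmax⟩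
  obtain ⟨⟨ht₀, hs₀⟩, rfl | ⟨rfl, hv⟩ | ⟨rfl, hv⟩⟩ := hq₀
  · exact Or.inl ⟨e₀, s₀, hs₀, rfl⟩
  · exact Or.inr ⟨ι e₀, hv, t₀, ht₀, (hcompat t₀ e₀).1⟩
  · exact Or.inr ⟨τ e₀, hv, t₀, ht₀, (hcompat t₀ e₀).2⟩

/-- Maximum principle for the heat equation on a metric graph.  The (finite part of the) graph
is given by edges `E` with endpoints `ι e, τ e ∈ V` and lengths `len e`; a function on
`[0,T] ×` graph is given edgewise by `u t e s` (`s ∈ [0, len e]`) together with vertex values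
`uV`, compatible at endpoints.  `Vb` is the set of boundary vertices of the precompact connected
open set `O` (after subdivision, `∂O ⊆` vertices).  If `u` is continuous, differentiable in `t`,
smooth in `s` on each edge, satisfies Kirchhoff's law at interior vertices and
`∂²u/∂s² − ∂u/∂t ≥ 0` on `(0,T) × O`, then the maximum of `u` over `[0,T] × closure(O)` is
attained on the parabolic boundary `([0,T] × ∂O) ∪ ({0} × closure O)`. -/
theorem stmt5
    (E V : Type) [Fintype E] [Fintype V] [Nonempty E] [DecidableEq V]
    (ι τ : E → V) (len : E → ℝ) (hlen : ∀ e, 0 < len e)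
    (T : ℝ) (hT : 0 < T)
    (Vb : Set V)
    (hincident : ∀ v, v ∉ Vb → ∃ e, ι e = v ∨ τ e = v)
    (hconn : ∀ v w : V, Relation.ReflTransGen
      (fun v w => ∃ e, (ι e = v ∧ τ e = w) ∨ (ι e = w ∧ τ e = v)) v w)
    (u : ℝ → E → ℝ → ℝ) (uV : ℝ → V → ℝ)
    (hcompat : ∀ t e, u t e 0 = uV t (ι e) ∧ u t e (len e) = uV t (τ e))
    (hcont : ∀ e, ContinuousOn (fun q : ℝ × ℝ => u q.1 e q.2)
      (Set.Icc 0 T ×ˢ Set.Icc 0 (len e)))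
    (ut us uss : ℝ → E → ℝ → ℝ)
    (hut : ∀ e, ∀ t ∈ Set.Ioo 0 T, ∀ s ∈ Set.Icc 0 (len e),
      HasDerivAt (fun t' => u t' e s) (ut t e s) t)
    (hus : ∀ e, ∀ t ∈ Set.Ioo 0 T, ∀ s ∈ Set.Icc 0 (len e),
      HasDerivWithinAt (fun σ => u t e σ) (us t e s) (Set.Icc 0 (len e)) s)
    (huss : ∀ e, ∀ t ∈ Set.Ioo 0 T, ∀ s ∈ Set.Ioo 0 (len e),
      HasDerivWithinAt (fun σ => us t e σ) (uss t e s) (Set.Ioo 0 (len e)) s)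
    (hkirch : ∀ t ∈ Set.Ioo 0 T, ∀ v, v ∉ Vb →
      (∑ e ∈ Finset.univ.filter fun e => ι e = v, us t e 0)
        = ∑ e ∈ Finset.univ.filter fun e => τ e = v, us t e (len e))
    (hheat : ∀ e, ∀ t ∈ Set.Ioo 0 T, ∀ s ∈ Set.Ioo 0 (len e), 0 ≤ uss t e s - ut t e s) :
    ∃ M : ℝ,
      ((∃ e, ∃ s ∈ Set.Icc 0 (len e), M = u 0 e s) ∨
        (∃ v ∈ Vb, ∃ t ∈ Set.Icc 0 T, M = uV t v)) ∧
      ∀ t ∈ Set.Icc 0 T, ∀ e, ∀ s ∈ Set.Icc 0 (len e), u t e s ≤ M :=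
  stmt5_general E V ι τ len hlen T hT Vb hincident u uV hcompat hcont ut us uss hut hus huss hkirch
    hheat
end

section
/- Superharmonic criterion for finiteness of the Green function: let (P_t^λ)_{t>0} be a sub-Markovian semigroup acting on nonnegative measurable functions on a σ-finite measure space (X, μ) with P_t^λ P_s^λ = P_{t+s}^λ. Suppose f ≥ 0 satisfies P_t^λ f ≤ f for all t, and there exist t > 0, ε > 0 and a set O with 0 < μ(O) < ∞ such that f(x) − P_t^λ f(x) > ε for all x ∈ O. Then for every x, ∫₀^∞ P_s^λ(1_O)(x) ds ≤ (t/ε)·f(x) < ∞ (the λ-Green integral over O is finite). -/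
open MeasureTheory Set Filter

/-! On `O` the gap gives `1_O ≤ ε⁻¹ (f - P_t f)`, so positivity and the semigroup law yield
`P_s 1_O ≤ ε⁻¹ (P_s f - P_{s+t} f)` for every `s > 0`. Integrated over `s ∈ (0, b)`, the right
side telescopes to `ε⁻¹ (∫₀^t P_s f - ∫_b^{b+t} P_s f) ≤ (t/ε) f`, because `0 ≤ P_s f ≤ f`;
letting `b → ∞` gives integrability on `(0, ∞)` and the bound. -/

section HalfLine

variable {g h : ℝ → ℝ} {t M C : ℝ}

theorem intervalIntegrable_of_bounded_on_Ioi (hg : Measurable g)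
    (hgM : ∀ s, 0 < s → ‖g s‖ ≤ M) {a b : ℝ} (ha : 0 ≤ a) (hb : 0 ≤ b) :
    IntervalIntegrable g volume a b := by
  refine (intervalIntegrable_const (c := M)).mono_fun' hg.aestronglyMeasurable ?_
  refine (ae_restrict_iff' measurableSet_uIoc).2 (Eventually.of_forall fun s hs => ?_)
  exact hgM s ((le_min ha hb).trans_lt hs.1)

/-- `∫₀^b (g s - g (s + t)) ds = ∫₀^t g - ∫_b^{b+t} g`. -/
theorem intervalIntegral_sub_comp_add_le (hg : Measurable g) (ht : 0 ≤ t)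
    (hg0 : ∀ s, 0 < s → 0 ≤ g s) (hgM : ∀ s, 0 < s → g s ≤ M) {b : ℝ} (hb : 0 ≤ b) :
    ∫ s in (0 : ℝ)..b, (g s - g (s + t)) ≤ t * M := by
  have hint : ∀ a c : ℝ, 0 ≤ a → 0 ≤ c → IntervalIntegrable g volume a c :=
    fun _ _ => intervalIntegrable_of_bounded_on_Ioi hg fun s hs => by
      rw [Real.norm_of_nonneg (hg0 s hs)]; exact hgM s hs
  have hshift : IntervalIntegrable (fun s => g (s + t)) volume 0 b := by
    simpa using (hint t (b + t) ht (by linarith)).comp_add_right t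
  have hhead : ∫ s in (0 : ℝ)..t, g s ≤ t * M := by
    simpa using intervalIntegral.integral_mono_on_of_le_Ioo ht (hint 0 t le_rfl ht)
      intervalIntegrable_const fun s hs => hgM s hs.1
  have htail : 0 ≤ ∫ s in b..b + t, g s := by
    simpa using intervalIntegral.integral_mono_on_of_le_Ioo (by linarith)
      intervalIntegrable_const (hint b (b + t) hb (by linarith))
      fun s hs => hg0 s (hb.trans_lt hs.1)
  rw [intervalIntegral.integral_sub (hint 0 b le_rfl hb) hshift,
    intervalIntegral.integral_comp_add_right, zero_add]
  have := intervalIntegral.integral_add_adjacent_intervals (hint 0 b le_rfl hb)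
    (hint b (b + t) hb (by linarith))
  rw [← intervalIntegral.integral_add_adjacent_intervals (hint 0 t le_rfl ht)
    (hint t (b + t) ht (by linarith))] at this
  linarith

theorem integrableOn_Ioi_and_integral_le_of_intervalIntegral_le
    (hint : ∀ b, 0 ≤ b → IntervalIntegrable h volume 0 b) (hh0 : ∀ s, 0 < s → 0 ≤ h s)
    (hC : ∀ b, 0 ≤ b → ∫ s in (0 : ℝ)..b, h s ≤ C) :
    IntegrableOn h (Ioi 0) ∧ ∫ s in Ioi 0, h s ≤ C := by
  have hnorm : ∀ b : ℝ, 0 ≤ b → ∫ s in (0 : ℝ)..b, ‖h s‖ = ∫ s in (0 : ℝ)..b, h s :=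
    fun b hb => intervalIntegral.integral_congr_ae' (Eventually.of_forall fun s hs =>
      Real.norm_of_nonneg (hh0 s hs.1)) (Eventually.of_forall fun _ hs => by
        simp [Ioc_eq_empty_of_le hb] at hs)
  have hIoi : IntegrableOn h (Ioi 0) :=
    integrableOn_Ioi_of_intervalIntegral_norm_bounded C 0
      (fun n : ℕ => (hint n n.cast_nonneg).1) tendsto_natCast_atTop_atTop
      (Eventually.of_forall fun n => (hnorm n n.cast_nonneg).trans_le (hC n n.cast_nonneg))
  exact ⟨hIoi, le_of_tendsto (intervalIntegral_tendsto_integral_Ioi 0 hIoi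
    tendsto_natCast_atTop_atTop) (Eventually.of_forall fun n => hC n n.cast_nonneg)⟩

theorem integrableOn_Ioi_and_integral_le_of_le_sub_comp_add (hg : Measurable g)
    (hh : Measurable h) (ht : 0 ≤ t) (hg0 : ∀ s, 0 < s → 0 ≤ g s) (hgM : ∀ s, 0 < s → g s ≤ M)
    (hh0 : ∀ s, 0 < s → 0 ≤ h s) (hle : ∀ s, 0 < s → h s ≤ g s - g (s + t)) :
    IntegrableOn h (Ioi 0) ∧ ∫ s in Ioi 0, h s ≤ t * M := by
  have hhM : ∀ s, 0 < s → ‖h s‖ ≤ M := fun s hs => by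
    rw [Real.norm_of_nonneg (hh0 s hs)]
    linarith [hle s hs, hg0 (s + t) (by linarith), hgM s hs]
  have hint : ∀ b, 0 ≤ b → IntervalIntegrable h volume 0 b :=
    fun b => intervalIntegrable_of_bounded_on_Ioi hh hhM le_rfl
  refine integrableOn_Ioi_and_integral_le_of_intervalIntegral_le hint hh0 fun b hb => ?_
  have hdiff : IntervalIntegrable (fun s => g s - g (s + t)) volume 0 b :=
    intervalIntegrable_of_bounded_on_Ioi (g := fun s => g s - g (s + t)) (M := M)
      (hg.sub (hg.comp (measurable_add_const t))) (fun s hs => by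
        rw [Real.norm_eq_abs, abs_sub_le_iff]
        have hst : 0 < s + t := by linarith
        constructor <;> linarith [hg0 s hs, hgM s hs, hg0 (s + t) hst, hgM (s + t) hst])
      le_rfl hb
  exact (intervalIntegral.integral_mono_on_of_le_Ioo hb (hint b hb) hdiff
    fun s hs => hle s hs.1).trans (intervalIntegral_sub_comp_add_le hg ht hg0 hgM hb)

end HalfLine

section PositiveOperator

variable {X : Type*} {Q : (X → ℝ) → X → ℝ}

theorem nonneg_of_monotone_of_map_sub (hmono : Monotone Q)
    (hsub : ∀ g h : X → ℝ, Q (fun x => g x - h x) = fun x => Q g x - Q h x)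
    {g : X → ℝ} (hg : 0 ≤ g) : 0 ≤ Q g := by
  have hQ0 : Q 0 = 0 := by simpa [← Pi.zero_def] using hsub 0 0
  exact hQ0 ▸ hmono hg

theorem apply_indicator_le_of_gap (hmono : Monotone Q)
    (hsub : ∀ g h : X → ℝ, Q (fun x => g x - h x) = fun x => Q g x - Q h x)
    (hhomog : ∀ c : ℝ, 0 ≤ c → ∀ g : X → ℝ, Q (fun x => c * g x) = fun x => c * Q g x)
    {f k : X → ℝ} {O : Set X} {ε : ℝ} (hε : 0 < ε) (hkf : k ≤ f)
    (hgap : ∀ x ∈ O, ε < f x - k x) :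
    Q (O.indicator fun _ => 1) ≤ fun x => ε⁻¹ * (Q f x - Q k x) := by
  have hind : O.indicator (fun _ => (1 : ℝ)) ≤ fun x => ε⁻¹ * (f x - k x) := by
    intro x
    by_cases hx : x ∈ O
    · rw [indicator_of_mem hx, le_inv_mul_iff₀ hε, mul_one]
      exact (hgap x hx).le
    · rw [indicator_of_notMem hx]
      exact mul_nonneg (inv_nonneg.2 hε.le) (sub_nonneg.2 (hkf x))
  calc Q (O.indicator fun _ => 1) ≤ Q (fun x => ε⁻¹ * (f x - k x)) := hmono hind
    _ = fun x => ε⁻¹ * (Q f x - Q k x) := by rw [hhomog _ (inv_nonneg.2 hε.le), hsub]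

end PositiveOperator

theorem stmt9_general {X : Type}
    (P : ℝ → (X → ℝ) → X → ℝ)
    (hsemi : ∀ s t : ℝ, 0 < s → 0 < t → ∀ g : X → ℝ, P s (P t g) = P (s + t) g)
    (hmono : ∀ t : ℝ, 0 < t → ∀ g h : X → ℝ, g ≤ h → P t g ≤ P t h)
    (hsub : ∀ t : ℝ, 0 < t → ∀ g h : X → ℝ,
      P t (fun x => g x - h x) = fun x => P t g x - P t h x)
    (hhomog : ∀ t : ℝ, 0 < t → ∀ c : ℝ, 0 ≤ c → ∀ g : X → ℝ,
      P t (fun x => c * g x) = fun x => c * P t g x)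
    (f : X → ℝ) (hf : 0 ≤ f)
    (hsuper : ∀ t : ℝ, 0 < t → P t f ≤ f)
    (t ε : ℝ) (ht : 0 < t) (hε : 0 < ε)
    (O : Set X)
    (hgap : ∀ x ∈ O, ε < f x - P t f x)
    (hmeas_ind : ∀ x, Measurable fun s => P s (O.indicator fun _ => (1 : ℝ)) x)
    (hmeas_f : ∀ x, Measurable fun s => P s f x) :
    ∀ x, IntegrableOn (fun s => P s (O.indicator fun _ => (1 : ℝ)) x) (Set.Ioi 0) ∧
      ∫ s in Set.Ioi (0 : ℝ), P s (O.indicator fun _ => (1 : ℝ)) x ≤ (t / ε) * f x := by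
  intro x
  have hPnonneg : ∀ s, 0 < s → ∀ {g : X → ℝ}, 0 ≤ g → 0 ≤ P s g := fun s hs _ =>
    nonneg_of_monotone_of_map_sub (hmono s hs) (hsub s hs)
  have hPind : ∀ s, 0 < s →
      P s (O.indicator fun _ => 1) x ≤ ε⁻¹ * P s f x - ε⁻¹ * P (s + t) f x := fun s hs => by
    rw [← hsemi s t hs ht, ← mul_sub]
    exact apply_indicator_le_of_gap (hmono s hs) (hsub s hs) (hhomog s hs) hε (hsuper t ht) hgap x
  obtain ⟨hint, hle⟩ := integrableOn_Ioi_and_integral_le_of_le_sub_comp_add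
    (g := fun s => ε⁻¹ * P s f x) (M := ε⁻¹ * f x) ((hmeas_f x).const_mul _) (hmeas_ind x) ht.le
    (fun s hs => mul_nonneg (inv_nonneg.2 hε.le) (hPnonneg s hs hf x))
    (fun s hs => mul_le_mul_of_nonneg_left (hsuper s hs x) (inv_nonneg.2 hε.le))
    (fun s hs => hPnonneg s hs (indicator_nonneg fun _ _ => zero_le_one) x) hPind
  exact ⟨hint, hle.trans_eq (by rw [div_eq_mul_inv]; ring)⟩

/-- Superharmonic criterion for finiteness of the Green function: let `(P_t)_{t>0}` be a
sub-Markovian semigroup of positive linear operators on functions on a measure space `(X, μ)`.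
If `f ≥ 0` satisfies `P_t f ≤ f` for all `t > 0`, and there are `t, ε > 0` and a set `O` with
`0 < μ O < ∞` such that `f − P_t f > ε` on `O`, then for every `x` the λ-Green integral
`∫₀^∞ P_s(1_O)(x) ds` is finite and bounded by `(t/ε)·f(x)`. -/
theorem stmt9 {X : Type} [MeasurableSpace X] (μ : Measure X)
    (P : ℝ → (X → ℝ) → X → ℝ)
    (hsemi : ∀ s t : ℝ, 0 < s → 0 < t → ∀ g : X → ℝ, P s (P t g) = P (s + t) g)
    (hmono : ∀ t : ℝ, 0 < t → ∀ g h : X → ℝ, g ≤ h → P t g ≤ P t h)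
    (hsub : ∀ t : ℝ, 0 < t → ∀ g h : X → ℝ,
      P t (fun x => g x - h x) = fun x => P t g x - P t h x)
    (hhomog : ∀ t : ℝ, 0 < t → ∀ c : ℝ, 0 ≤ c → ∀ g : X → ℝ,
      P t (fun x => c * g x) = fun x => c * P t g x)
    (hsubM : ∀ t : ℝ, 0 < t → P t (fun _ => (1 : ℝ)) ≤ fun _ => (1 : ℝ))
    (f : X → ℝ) (hf : 0 ≤ f)
    (hsuper : ∀ t : ℝ, 0 < t → P t f ≤ f)
    (t ε : ℝ) (ht : 0 < t) (hε : 0 < ε)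
    (O : Set X) (hOm : MeasurableSet O) (hO1 : 0 < μ O) (hO2 : μ O < ⊤)
    (hgap : ∀ x ∈ O, ε < f x - P t f x)
    (hmeas_ind : ∀ x, Measurable fun s => P s (O.indicator fun _ => (1 : ℝ)) x)
    (hmeas_f : ∀ x, Measurable fun s => P s f x) :
    ∀ x, IntegrableOn (fun s => P s (O.indicator fun _ => (1 : ℝ)) x) (Set.Ioi 0) ∧
      ∫ s in Set.Ioi (0 : ℝ), P s (O.indicator fun _ => (1 : ℝ)) x ≤ (t / ε) * f x :=
  stmt9_general P hsemi hmono hsub hhomog f hf hsuper t ε ht hε O hgap hmeas_ind hmeas_f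
end

section
/- Uniqueness forces amenability step: if f₁ and f₂ are two distinct extreme points of a convex compact set of positive λ₀-harmonic functions normalized at x₀ with neither f₁ ≤ f₂ nor f₂ ≤ f₁, then f = min(f₁, f₂) satisfies P_t^{λ₀} f ≤ f_i for i = 1,2 and hence P_t^{λ₀} f ≤ f, and f is strictly superharmonic (not harmonic) at some point; consequently (by the superharmonic criterion), the λ₀-Green function is finite. -/
/-!
The kernel is strictly positive and `f₁, f₂` are harmonic, so averaging `f = min f₁ f₂ ≤ fᵢ`,
which is strictly smaller than `fᵢ` on a nonempty open set, gives `P_t f < fᵢ` everywhere.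
The defect `u = f - P_1 f` is then a strictly positive function, so `1_O ≤ c u` for some set `O`
of finite positive measure. The semigroup law gives `P_s u = P_s f - P_{s+1} f`, so the Green
integral telescopes: `∫₀^∞ P_s 1_O ds ≤ c ∫₀^∞ (P_s f - P_{s+1} f) ds ≤ c ∫₀^1 P_s f ds ≤ c f`.
-/

open MeasureTheory

section

open Set Filter

lemma integrableOn_Ioi_of_le_sub_add_one {q h : ℝ → ℝ} {M : ℝ}
    (hq : Measurable q) (hh : Measurable h)
    (hq_nonneg : ∀ s, 0 < s → 0 ≤ q s) (hqh : ∀ s, 0 < s → q s ≤ h s - h (s + 1))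
    (hh_nonneg : ∀ s, 0 < s → 0 ≤ h s) (hhM : ∀ s, 0 < s → h s ≤ M) :
    IntegrableOn q (Ioi 0) := by
  have bounded : ∀ φ : ℝ → ℝ, Measurable φ → (∀ s, 0 < s → ‖φ s‖ ≤ M) →
      ∀ a b, 0 ≤ a → IntegrableOn φ (Ioc a b) := by
    intro φ hφ hφM a b ha
    refine Measure.integrableOn_of_bounded measure_Ioc_lt_top.ne hφ.aestronglyMeasurable
      (M := M) ?_
    filter_upwards [ae_restrict_mem measurableSet_Ioc] with s hs
    exact hφM s (ha.trans_lt hs.1)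
  have hq_le : ∀ s, 0 < s → ‖q s‖ ≤ M := fun s hs => by
    rw [Real.norm_of_nonneg (hq_nonneg s hs)]
    linarith [hqh s hs, hh_nonneg (s + 1) (by linarith), hhM s hs]
  have hh_le : ∀ s, 0 < s → ‖h s‖ ≤ M := fun s hs => by
    rw [Real.norm_of_nonneg (hh_nonneg s hs)]
    exact hhM s hs
  have hh_int : ∀ a b, 0 ≤ a → a ≤ b → IntervalIntegrable h volume a b := fun a b ha hab =>
    (intervalIntegrable_iff_integrableOn_Ioc_of_le hab).2 (bounded h hh hh_le a b ha)
  have hh_shift_int : ∀ b, 0 ≤ b → IntervalIntegrable (fun s => h (s + 1)) volume 0 b :=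
    fun b hb => (intervalIntegrable_iff_integrableOn_Ioc_of_le hb).2 <|
      bounded _ (hh.comp (measurable_add_const 1)) (fun s hs => hh_le _ (by linarith)) 0 b le_rfl
  refine integrableOn_Ioi_of_intervalIntegral_norm_bounded (l := atTop) (b := id) M 0
    (fun b => ?_) tendsto_id ?_
  · rcases le_total 0 b with hb | hb
    · exact bounded q hq hq_le 0 b le_rfl
    · simp [Ioc_eq_empty_of_le hb]
  filter_upwards [eventually_gt_atTop 1] with N hN
  have hN : 0 ≤ N := by linarith
  calc ∫ s in (0 : ℝ)..N, ‖q s‖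
      ≤ ∫ s in (0 : ℝ)..N, (h s - h (s + 1)) := by
        refine intervalIntegral.integral_mono_on_of_le_Ioo hN ?_ ((hh_int 0 N le_rfl hN).sub
          (hh_shift_int N hN)) fun s hs => ?_
        · exact ((intervalIntegrable_iff_integrableOn_Ioc_of_le hN).2
            (bounded q hq hq_le 0 N le_rfl)).norm
        · rw [Real.norm_of_nonneg (hq_nonneg s hs.1)]
          exact hqh s hs.1
    _ = (∫ s in (0 : ℝ)..1, h s) - ∫ s in N..N + 1, h s := by
        rw [intervalIntegral.integral_sub (hh_int 0 N le_rfl hN) (hh_shift_int N hN),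
          intervalIntegral.integral_comp_add_right, zero_add,
          intervalIntegral.integral_interval_sub_interval_comm (hh_int 0 N le_rfl hN)
            (hh_int 1 (N + 1) zero_le_one (by linarith)) (hh_int 0 1 le_rfl zero_le_one)]
    _ ≤ M - 0 := by
        refine sub_le_sub ?_ (intervalIntegral.integral_nonneg (by linarith)
          fun s hs => hh_nonneg s (by linarith [hs.1]))
        calc ∫ s in (0 : ℝ)..1, h s ≤ ∫ _ in (0 : ℝ)..1, M :=
              intervalIntegral.integral_mono_on_of_le_Ioo zero_le_one
                (hh_int 0 1 le_rfl zero_le_one) intervalIntegrable_const fun s hs => hhM s hs.1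
          _ = M := by simp
    _ = M := sub_zero M

variable {X : Type*} [MeasurableSpace X] {μ : Measure X}

lemma exists_indicator_le_mul [SigmaFinite μ] (hμ : μ ≠ 0) {u : X → ℝ} (hu : Measurable u)
    (hu_pos : ∀ y, 0 < u y) :
    ∃ O : Set X, ∃ c : ℝ, MeasurableSet O ∧ 0 < μ O ∧ μ O < ⊤ ∧ 0 < c ∧
      ∀ y, O.indicator (fun _ => (1 : ℝ)) y ≤ c * u y := by
  have hcover : (⋃ n : ℕ, {y | 1 / ((n : ℝ) + 1) ≤ u y}) = univ :=
    iUnion_eq_univ_iff.2 fun y => (exists_nat_one_div_lt (hu_pos y)).imp fun _ => le_of_lt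
  obtain ⟨n, hn⟩ := exists_measure_pos_of_not_measure_iUnion_null
    (by rwa [hcover, Ne, Measure.measure_univ_eq_zero])
  obtain ⟨O, hO, hOsub, hO_pos, hO_fin⟩ :=
    Measure.exists_subset_measure_lt_top (measurableSet_le measurable_const hu) hn
  refine ⟨O, (n : ℝ) + 1, hO, hO_pos, hO_fin, by positivity, fun y => ?_⟩
  by_cases hy : y ∈ O
  · rw [indicator_of_mem hy, ← div_le_iff₀' (by positivity)]
    exact hOsub hy
  · rw [indicator_of_notMem hy]
    exact mul_nonneg (by positivity) (hu_pos y).le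

lemma integrable_mul_of_le {w g h : X → ℝ} (hw : 0 ≤ w) (hw_meas : Measurable w)
    (hg_meas : Measurable g) (hg_nonneg : 0 ≤ g) (hgh : g ≤ h)
    (hint : Integrable (fun y => w y * h y) μ) : Integrable (fun y => w y * g y) μ := by
  refine hint.mono' (hw_meas.mul hg_meas).aestronglyMeasurable (ae_of_all _ fun y => ?_)
  rw [Real.norm_of_nonneg (mul_nonneg (hw y) (hg_nonneg y))]
  exact mul_le_mul_of_nonneg_left (hgh y) (hw y)

lemma integral_mul_lt_integral_mul [TopologicalSpace X] [OpensMeasurableSpace X]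
    [μ.IsOpenPosMeasure] {w g h : X → ℝ} (hw : ∀ y, 0 < w y) (hw_meas : Measurable w)
    (hg : Continuous g) (hh : Continuous h) (hg_nonneg : 0 ≤ g) (hgh : g ≤ h)
    (hlt : ∃ y, g y < h y) (hint : Integrable (fun y => w y * h y) μ) :
    ∫ y, w y * g y ∂μ < ∫ y, w y * h y ∂μ := by
  have hint_g : Integrable (fun y => w y * g y) μ :=
    integrable_mul_of_le (fun y => (hw y).le) hw_meas hg.measurable hg_nonneg hgh hint
  rw [← sub_pos, ← integral_sub hint hint_g]
  refine (integral_pos_iff_support_of_nonneg (fun y => ?_) (hint.sub hint_g)).2 ?_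
  · exact sub_nonneg.2 (mul_le_mul_of_nonneg_left (hgh y) (hw y).le)
  · refine lt_of_lt_of_le ((isOpen_lt hg hh).measure_pos μ hlt) (measure_mono fun y hy => ?_)
    exact (sub_pos.2 (mul_lt_mul_of_pos_left hy (hw y))).ne'

variable (μ) in
noncomputable def kernelOp (K : ℝ → X → X → ℝ) (t : ℝ) (g : X → ℝ) (x : X) : ℝ :=
  ∫ y, K t x y * g y ∂μ

variable {K : ℝ → X → X → ℝ}

lemma kernelOp_nonneg {t : ℝ} {x : X} (hK : ∀ y, 0 ≤ K t x y) {g : X → ℝ} (hg : 0 ≤ g) :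
    0 ≤ kernelOp μ K t g x :=
  integral_nonneg fun y => mul_nonneg (hK y) (hg y)

lemma integrable_of_kernelOp_eq {t : ℝ} {x : X} {h : X → ℝ}
    (hharm : kernelOp μ K t h x = h x) (hx : h x ≠ 0) :
    Integrable (fun y => K t x y * h y) μ :=
  Integrable.of_integral_ne_zero (by rw [← hharm] at hx; exact hx)

lemma kernelOp_min_lt_min [TopologicalSpace X] [OpensMeasurableSpace X] [μ.IsOpenPosMeasure]
    {t : ℝ} {x : X} (hK_pos : ∀ y, 0 < K t x y) (hK_meas : Measurable (K t x))
    {f₁ f₂ : X → ℝ} (hf₁_pos : ∀ y, 0 < f₁ y) (hf₂_pos : ∀ y, 0 < f₂ y)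
    (hf₁ : Continuous f₁) (hf₂ : Continuous f₂)
    (hharm₁ : kernelOp μ K t f₁ x = f₁ x) (hharm₂ : kernelOp μ K t f₂ x = f₂ x)
    (h12 : ¬ f₁ ≤ f₂) (h21 : ¬ f₂ ≤ f₁) :
    kernelOp μ K t (fun y => min (f₁ y) (f₂ y)) x < min (f₁ x) (f₂ x) := by
  have hmin_nonneg : (0 : X → ℝ) ≤ fun y => min (f₁ y) (f₂ y) :=
    fun y => le_min (hf₁_pos y).le (hf₂_pos y).le
  obtain ⟨y₁, hy₁⟩ : ∃ y, f₂ y < f₁ y := by simpa [Pi.le_def] using h12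
  obtain ⟨y₂, hy₂⟩ : ∃ y, f₁ y < f₂ y := by simpa [Pi.le_def] using h21
  refine lt_min ?_ ?_
  · rw [← hharm₁]
    exact integral_mul_lt_integral_mul hK_pos hK_meas (hf₁.min hf₂) hf₁ hmin_nonneg
      (fun y => min_le_left _ _) ⟨y₁, min_lt_of_right_lt hy₁⟩
      (integrable_of_kernelOp_eq hharm₁ (hf₁_pos x).ne')
  · rw [← hharm₂]
    exact integral_mul_lt_integral_mul hK_pos hK_meas (hf₁.min hf₂) hf₂ hmin_nonneg
      (fun y => min_le_right _ _) ⟨y₂, min_lt_of_left_lt hy₂⟩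
      (integrable_of_kernelOp_eq hharm₂ (hf₂_pos x).ne')

variable (hK_meas : Measurable fun q : ℝ × X × X => K q.1 q.2.1 q.2.2)
include hK_meas

lemma measurable_kernel_apply (t : ℝ) (x : X) : Measurable (K t x) :=
  hK_meas.comp (measurable_const.prodMk (measurable_const.prodMk measurable_id))

lemma measurable_kernelOp_time [SFinite μ] {g : X → ℝ} (hg : Measurable g) (x : X) :
    Measurable fun t => kernelOp μ K t g x := by
  have : Measurable fun q : ℝ × X => K q.1 x q.2 * g q.2 :=
    (hK_meas.comp (measurable_fst.prodMk (measurable_const.prodMk measurable_snd))).mul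
      (hg.comp measurable_snd)
  exact this.stronglyMeasurable.integral_prod_right'.measurable

lemma measurable_kernelOp_space [SFinite μ] {g : X → ℝ} (hg : Measurable g) (t : ℝ) :
    Measurable (kernelOp μ K t g) := by
  have : Measurable fun q : X × X => K t q.1 q.2 * g q.2 :=
    (hK_meas.comp (measurable_const.prodMk (measurable_fst.prodMk measurable_snd))).mul
      (hg.comp measurable_snd)
  exact this.stronglyMeasurable.integral_prod_right'.measurable

/-- The double integral is absolutely convergent because, by Chapman–Kolmogorov, its inner
`y`-integrals of absolute values are `|K (s + t) x z * f z|`. -/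
lemma kernelOp_kernelOp [SFinite μ] (hK_pos : ∀ t, 0 < t → ∀ x y, 0 < K t x y)
    (hCK : ∀ s t, 0 < s → 0 < t → ∀ x y, ∫ z, K s x z * K t z y ∂μ = K (s + t) x y)
    {s t : ℝ} (hs : 0 < s) (ht : 0 < t) {f : X → ℝ} (hf : Measurable f) {x : X}
    (hint : Integrable (fun z => K (s + t) x z * f z) μ) :
    kernelOp μ K s (kernelOp μ K t f) x = kernelOp μ K (s + t) f x := by
  set F : X → X → ℝ := fun y z => K s x y * (K t y z * f z)
  have hF_meas : Measurable (Function.uncurry F) :=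
    (hK_meas.comp (measurable_const.prodMk (measurable_const.prodMk measurable_fst))).mul
      ((hK_meas.comp (measurable_const.prodMk (measurable_fst.prodMk measurable_snd))).mul
        (hf.comp measurable_snd))
  have hF_int : Integrable (Function.uncurry F) (μ.prod μ) := by
    refine (integrable_prod_iff' hF_meas.aestronglyMeasurable).2 ⟨ae_of_all _ fun z => ?_, ?_⟩
    · have : Integrable (fun y => K s x y * K t y z) μ := Integrable.of_integral_ne_zero
        (by rw [hCK s t hs ht]; exact (hK_pos _ (add_pos hs ht) x z).ne')
      simpa only [F, Function.uncurry_apply_pair, mul_assoc] using this.mul_const (f z)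
    · refine hint.norm.congr (ae_of_all _ fun z => ?_)
      simp only [F, Function.uncurry_apply_pair, norm_mul, Real.norm_of_nonneg
        (hK_pos _ hs _ _).le, Real.norm_of_nonneg (hK_pos _ ht _ _).le, ← mul_assoc,
        integral_mul_const, hCK s t hs ht,
        Real.norm_of_nonneg (hK_pos _ (add_pos hs ht) _ _).le]
  calc kernelOp μ K s (kernelOp μ K t f) x = ∫ y, ∫ z, F y z ∂μ ∂μ := by
        simp only [kernelOp, F, integral_const_mul]
    _ = ∫ z, ∫ y, F y z ∂μ ∂μ := integral_integral_swap hF_int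
    _ = kernelOp μ K (s + t) f x := by
        simp only [kernelOp, F, ← mul_assoc, integral_mul_const, hCK s t hs ht]

lemma exists_integrableOn_kernelOp_indicator [SigmaFinite μ] (hμ : μ ≠ 0)
    (hK_pos : ∀ t, 0 < t → ∀ x y, 0 < K t x y)
    (hCK : ∀ s t, 0 < s → 0 < t → ∀ x y, ∫ z, K s x z * K t z y ∂μ = K (s + t) x y)
    {f : X → ℝ} (hf : Measurable f) (hf_nonneg : 0 ≤ f)
    (hint : ∀ t, 0 < t → ∀ x, Integrable (fun y => K t x y * f y) μ)
    (hsuper : ∀ t, 0 < t → ∀ x, kernelOp μ K t f x ≤ f x)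
    (hstrict : ∀ x, kernelOp μ K 1 f x < f x) :
    ∃ O : Set X, MeasurableSet O ∧ 0 < μ O ∧ μ O < ⊤ ∧
      ∀ x, IntegrableOn (fun s => kernelOp μ K s (O.indicator fun _ => (1 : ℝ)) x) (Ioi 0) := by
  have hK_nonneg : ∀ t, 0 < t → ∀ x y, 0 ≤ K t x y := fun t ht x y => (hK_pos t ht x y).le
  set Pf := kernelOp μ K 1 f
  have hPf_meas : Measurable Pf := measurable_kernelOp_space hK_meas hf 1
  have hPf_nonneg : 0 ≤ Pf := fun y => kernelOp_nonneg (hK_nonneg 1 one_pos y) hf_nonneg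
  obtain ⟨O, c, hO, hO_pos, hO_fin, hc, hOc⟩ :=
    exists_indicator_le_mul hμ (hf.sub hPf_meas) fun y => sub_pos.2 (hstrict y)
  refine ⟨O, hO, hO_pos, hO_fin, fun x => ?_⟩
  have hdefect : ∀ s, 0 < s → kernelOp μ K s (O.indicator fun _ => (1 : ℝ)) x ≤
      c * kernelOp μ K s f x - c * kernelOp μ K (s + 1) f x := by
    intro s hs
    have hint_Pf : Integrable (fun y => K s x y * Pf y) μ :=
      integrable_mul_of_le (hK_nonneg s hs x) (measurable_kernel_apply hK_meas s x) hPf_meas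
        hPf_nonneg (fun y => hsuper 1 one_pos y) (hint s hs x)
    calc kernelOp μ K s (O.indicator fun _ => (1 : ℝ)) x
        ≤ ∫ y, c * (K s x y * f y - K s x y * Pf y) ∂μ := by
          refine integral_mono_of_nonneg (ae_of_all _ fun y => ?_)
            (((hint s hs x).sub hint_Pf).const_mul c) (ae_of_all _ fun y => ?_)
          · exact mul_nonneg (hK_nonneg s hs x y) (indicator_nonneg (fun _ _ => zero_le_one) y)
          · calc K s x y * O.indicator (fun _ => (1 : ℝ)) y ≤ K s x y * (c * (f y - Pf y)) :=
                  mul_le_mul_of_nonneg_left (hOc y) (hK_nonneg s hs x y)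
              _ = c * (K s x y * f y - K s x y * Pf y) := by ring
      _ = c * (kernelOp μ K s f x - kernelOp μ K s Pf x) := by
          rw [integral_const_mul, integral_sub (hint s hs x) hint_Pf]
          rfl
      _ = c * kernelOp μ K s f x - c * kernelOp μ K (s + 1) f x := by
          rw [kernelOp_kernelOp hK_meas hK_pos hCK hs one_pos hf (hint _ (by positivity) x),
            mul_sub]
  exact integrableOn_Ioi_of_le_sub_add_one (h := fun s => c * kernelOp μ K s f x)
    (M := c * f x) (measurable_kernelOp_time hK_meas (measurable_const.indicator hO) x)
    ((measurable_kernelOp_time hK_meas hf x).const_mul c)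
    (fun s hs => kernelOp_nonneg (hK_nonneg s hs x) (indicator_nonneg (fun _ _ => zero_le_one)))
    hdefect (fun s hs => mul_nonneg hc.le (kernelOp_nonneg (hK_nonneg s hs x) hf_nonneg))
    (fun s hs => mul_le_mul_of_nonneg_left (hsuper s hs x) hc.le)

end

theorem stmt10_general {X : Type} [MeasurableSpace X] [TopologicalSpace X] [BorelSpace X]
    (μ : Measure X) [SigmaFinite μ] [μ.IsOpenPosMeasure]
    (p : ℝ → X → X → ℝ)
    (hp_pos : ∀ t : ℝ, 0 < t → ∀ x y, 0 < p t x y)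
    (hp_meas : Measurable fun q : ℝ × X × X => p q.1 q.2.1 q.2.2)
    (hCK : ∀ s t : ℝ, 0 < s → 0 < t → ∀ x y, ∫ z, p s x z * p t z y ∂μ = p (s + t) x y)
    (lam0 : ℝ)
    (P : ℝ → (X → ℝ) → X → ℝ)
    (hP : ∀ t g x, P t g x = ∫ y, Real.exp (lam0 * t) * p t x y * g y ∂μ)
    (f₁ f₂ : X → ℝ) (hf₁pos : ∀ x, 0 < f₁ x) (hf₂pos : ∀ x, 0 < f₂ x)
    (hf₁c : Continuous f₁) (hf₂c : Continuous f₂)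
    (hharm₁ : ∀ t : ℝ, 0 < t → ∀ x, P t f₁ x = f₁ x)
    (hharm₂ : ∀ t : ℝ, 0 < t → ∀ x, P t f₂ x = f₂ x)
    (h12 : ¬ f₁ ≤ f₂) (h21 : ¬ f₂ ≤ f₁) :
    (∀ t : ℝ, 0 < t → ∀ x,
      (P t (fun y => min (f₁ y) (f₂ y)) x ≤ f₁ x ∧ P t (fun y => min (f₁ y) (f₂ y)) x ≤ f₂ x) ∧
      P t (fun y => min (f₁ y) (f₂ y)) x < min (f₁ x) (f₂ x)) ∧
    ∃ O : Set X, MeasurableSet O ∧ 0 < μ O ∧ μ O < ⊤ ∧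
      ∀ x, IntegrableOn (fun s => P s (O.indicator fun _ => (1 : ℝ)) x) (Set.Ioi 0) := by
  set K : ℝ → X → X → ℝ := fun t x y => Real.exp (lam0 * t) * p t x y
  obtain rfl : P = kernelOp μ K := funext fun t => funext fun g => funext fun x => hP t g x
  have hK_pos : ∀ t, 0 < t → ∀ x y, 0 < K t x y :=
    fun t ht x y => mul_pos (Real.exp_pos _) (hp_pos t ht x y)
  have hK_meas : Measurable fun q : ℝ × X × X => K q.1 q.2.1 q.2.2 :=
    (Real.measurable_exp.comp (measurable_fst.const_mul lam0)).mul hp_meas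
  have hK_CK : ∀ s t, 0 < s → 0 < t → ∀ x y, ∫ z, K s x z * K t z y ∂μ = K (s + t) x y := by
    intro s t hs ht x y
    simp only [K, mul_mul_mul_comm _ (p s x _), integral_const_mul, hCK s t hs ht, ← Real.exp_add,
      mul_add]
  have hlt : ∀ t, 0 < t → ∀ x, kernelOp μ K t (fun y => min (f₁ y) (f₂ y)) x < min (f₁ x) (f₂ x) :=
    fun t ht x => kernelOp_min_lt_min (hK_pos t ht x) (measurable_kernel_apply hK_meas t x)
      hf₁pos hf₂pos hf₁c hf₂c (hharm₁ t ht x) (hharm₂ t ht x) h12 h21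
  have : Nonempty X := by
    by_contra hX
    exact h12 fun y => (hX ⟨y⟩).elim
  refine ⟨fun t ht x => ⟨(lt_min_iff.1 (hlt t ht x)).imp le_of_lt le_of_lt, hlt t ht x⟩,
    exists_integrableOn_kernelOp_indicator hK_meas (NeZero.ne μ) hK_pos hK_CK
      (hf₁c.min hf₂c).measurable (fun y => le_min (hf₁pos y).le (hf₂pos y).le)
      (fun t ht x => ?_) (fun t ht x => (hlt t ht x).le) (fun x => hlt 1 one_pos x)⟩
  exact integrable_mul_of_le (fun y => (hK_pos t ht x y).le) (measurable_kernel_apply hK_meas t x)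
    (hf₁c.min hf₂c).measurable (fun y => le_min (hf₁pos y).le (hf₂pos y).le)
    (fun y => min_le_left _ _) (integrable_of_kernelOp_eq (hharm₁ t ht x) (hf₁pos x).ne')

/-- Uniqueness forces amenability step: if `f₁, f₂` are two distinct positive continuous
`λ₀`-harmonic functions (for the semigroup `P_t g(x) = ∫ e^{λ₀t} p(t,x,y) g(y) dμ(y)` with a
strictly positive stochastically complete heat kernel `p`), normalized at `x₀`, with neither
`f₁ ≤ f₂` nor `f₂ ≤ f₁`, then `f = min(f₁,f₂)` is strictly superharmonic:
`P_t f < min(f₁,f₂) = f` pointwise; consequently (by the superharmonic criterion) the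
`λ₀`-Green function is finite: there is a set `O` of finite positive measure whose λ₀-Green
integral `∫₀^∞ P_s(1_O)(x) ds` converges for every `x`. -/
theorem stmt10 {X : Type} [MeasurableSpace X] [TopologicalSpace X] [BorelSpace X] [Nonempty X]
    (μ : Measure X) [SigmaFinite μ] [μ.IsOpenPosMeasure]
    (p : ℝ → X → X → ℝ)
    (hp_pos : ∀ t : ℝ, 0 < t → ∀ x y, 0 < p t x y)
    (hp_meas : Measurable fun q : ℝ × X × X => p q.1 q.2.1 q.2.2)
    (hCK : ∀ s t : ℝ, 0 < s → 0 < t → ∀ x y, ∫ z, p s x z * p t z y ∂μ = p (s + t) x y)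
    (hcomplete : ∀ t : ℝ, 0 < t → ∀ x, ∫ y, p t x y ∂μ = 1)
    (lam0 : ℝ)
    (P : ℝ → (X → ℝ) → X → ℝ)
    (hP : ∀ t g x, P t g x = ∫ y, Real.exp (lam0 * t) * p t x y * g y ∂μ)
    (f₁ f₂ : X → ℝ) (hf₁pos : ∀ x, 0 < f₁ x) (hf₂pos : ∀ x, 0 < f₂ x)
    (hf₁c : Continuous f₁) (hf₂c : Continuous f₂)
    (hharm₁ : ∀ t : ℝ, 0 < t → ∀ x, P t f₁ x = f₁ x)
    (hharm₂ : ∀ t : ℝ, 0 < t → ∀ x, P t f₂ x = f₂ x)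
    (x₀ : X) (hn₁ : f₁ x₀ = 1) (hn₂ : f₂ x₀ = 1) (hne : f₁ ≠ f₂)
    (h12 : ¬ f₁ ≤ f₂) (h21 : ¬ f₂ ≤ f₁) :
    (∀ t : ℝ, 0 < t → ∀ x,
      (P t (fun y => min (f₁ y) (f₂ y)) x ≤ f₁ x ∧ P t (fun y => min (f₁ y) (f₂ y)) x ≤ f₂ x) ∧
      P t (fun y => min (f₁ y) (f₂ y)) x < min (f₁ x) (f₂ x)) ∧
    ∃ O : Set X, MeasurableSet O ∧ 0 < μ O ∧ μ O < ⊤ ∧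
      ∀ x, IntegrableOn (fun s => P s (O.indicator fun _ => (1 : ℝ)) x) (Set.Ioi 0) :=
  stmt10_general μ p hp_pos hp_meas hCK lam0 P hP f₁ f₂ hf₁pos hf₂pos hf₁c hf₂c hharm₁ hharm₂ h12
    h21
end

section
/- Ancona multiplicativity (lower bound) implies the ratio comparison: suppose G : X × X → (0,∞) satisfies C⁻¹ G(x,y) G(y,z) ≤ G(x,z) ≤ C G(x,y) G(y,z) whenever y lies on a geodesic from x to z at distance ≥ 1 from both. Then for points x, x' and y, y' such that a common point w lies within bounded distance of geodesics [x,y], [x',y], [x,y'], [x',y'], the cross-ratio satisfies (G(x,y)/G(x',y)) / (G(x,y')/G(x',y')) ∈ [C'^{-1}, C'] for a constant C' depending only on C and the Harnack constant. -/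
/-!
Let `w` be within `r` of a point `q` on a geodesic `[a, b]`, with `w` at distance `≥ r + 1` from
`a` and `b`. Ancona's inequality at `q` compares `G a b` with `G a q * G q b`, and the Harnack
inequality moves `q` to `w` at a multiplicative cost `exp (D * r)` per factor, so `G a b` agrees
with `G a w * G w b` up to the factor `K = C * exp (D * r) ^ 2`. In the cross-ratio of the four
kernels the factors `G x w`, `G x' w`, `G w y`, `G w y'` cancel, leaving an error of at most `K ^ 4`.
-/

open Real

def MulComparable (K a b : ℝ) : Prop :=
  K⁻¹ * b ≤ a ∧ a ≤ K * b

namespace MulComparable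

variable {K L a b c d : ℝ}

theorem trans (h : MulComparable K a b) (h' : MulComparable L b c) (hK : 0 ≤ K) :
    MulComparable (K * L) a c := by
  obtain ⟨hab, hba⟩ := h
  obtain ⟨hbc, hcb⟩ := h'
  constructor
  · calc (K * L)⁻¹ * c = K⁻¹ * (L⁻¹ * c) := by rw [mul_inv]; ring
      _ ≤ K⁻¹ * b := by gcongr
      _ ≤ a := hab
  · calc a ≤ K * b := hba
      _ ≤ K * (L * c) := by gcongr
      _ = K * L * c := by ring

theorem mul (h : MulComparable K a b) (h' : MulComparable L c d) (hK : 0 ≤ K) (hL : 0 ≤ L)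
    (hb : 0 ≤ b) (hd : 0 ≤ d) : MulComparable (K * L) (a * c) (b * d) := by
  obtain ⟨hab, hba⟩ := h
  obtain ⟨hcd, hdc⟩ := h'
  have ha : 0 ≤ a := le_trans (by positivity) hab
  have hc : 0 ≤ c := le_trans (by positivity) hcd
  constructor
  · calc (K * L)⁻¹ * (b * d) = (K⁻¹ * b) * (L⁻¹ * d) := by rw [mul_inv]; ring
      _ ≤ a * c := mul_le_mul hab hcd (by positivity) ha
  · calc a * c ≤ (K * b) * (L * d) := mul_le_mul hba hdc hc (by positivity)
      _ = K * L * (b * d) := by ring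

theorem inv (h : MulComparable K a b) (hK : 0 < K) (hb : 0 < b) :
    MulComparable K a⁻¹ b⁻¹ := by
  obtain ⟨hab, hba⟩ := h
  have ha : 0 < a := lt_of_lt_of_le (by positivity) hab
  constructor
  · calc K⁻¹ * b⁻¹ = (K * b)⁻¹ := (mul_inv K b).symm
      _ ≤ a⁻¹ := inv_anti₀ ha hba
  · calc a⁻¹ ≤ (K⁻¹ * b)⁻¹ := inv_anti₀ (by positivity) hab
      _ = K * b⁻¹ := by rw [mul_inv, inv_inv]

theorem div (h : MulComparable K a b) (h' : MulComparable L c d) (hK : 0 < K) (hL : 0 < L)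
    (hb : 0 < b) (hd : 0 < d) : MulComparable (K * L) (a / c) (b / d) := by
  simpa only [div_eq_mul_inv] using h.mul (h'.inv hL hd) hK.le hL.le hb.le (by positivity)

theorem crossRatio {p₁ p₂ p₃ p₄ a a' b b' : ℝ} (h₁ : MulComparable K p₁ (a * b))
    (h₂ : MulComparable K p₂ (a' * b)) (h₃ : MulComparable K p₃ (a * b'))
    (h₄ : MulComparable K p₄ (a' * b')) (hK : 0 < K) (ha : 0 < a) (ha' : 0 < a')
    (hb : 0 < b) (hb' : 0 < b') :
    MulComparable (K ^ 4) (p₁ / p₂ / (p₃ / p₄)) 1 := by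
  have hy : MulComparable (K * K) (p₁ / p₂) (a / a') := by
    simpa only [mul_div_mul_right _ _ hb.ne'] using h₁.div h₂ hK hK (by positivity) (by positivity)
  have hy' : MulComparable (K * K) (p₃ / p₄) (a / a') := by
    simpa only [mul_div_mul_right _ _ hb'.ne'] using h₃.div h₄ hK hK (by positivity) (by positivity)
  have := hy.div hy' (by positivity) (by positivity) (by positivity) (by positivity)
  rwa [div_self (by positivity), ← pow_two, ← pow_two, ← pow_mul] at this

end MulComparable

section Kernel

variable {X : Type*} [MetricSpace X] {G : X → X → ℝ} {C D r : ℝ}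

theorem mulComparable_of_harnack (hpos : ∀ a b, 0 < G a b)
    (hHar : ∀ a b c : X, 1 ≤ dist a b → 1 ≤ dist a c → G a b / G a c ≤ exp (D * dist b c))
    (hD : 0 ≤ D) {a q w : X} (haq : 1 ≤ dist a q) (haw : 1 ≤ dist a w) (hqw : dist q w ≤ r) :
    MulComparable (exp (D * r)) (G a q) (G a w) := by
  have hexp : ∀ {u v : X}, dist u v ≤ r → exp (D * dist u v) ≤ exp (D * r) := fun h =>
    exp_le_exp.2 (mul_le_mul_of_nonneg_left h hD)
  constructor
  · rw [inv_mul_le_iff₀ (exp_pos _)]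
    exact (div_le_iff₀ (hpos a q)).1 ((hHar a w q haw haq).trans (hexp (dist_comm q w ▸ hqw)))
  · exact (div_le_iff₀ (hpos a w)).1 ((hHar a q w haq haw).trans (hexp hqw))

theorem mulComparable_of_near_geodesic (hpos : ∀ a b, 0 < G a b) (hsym : ∀ a b, G a b = G b a)
    (hAnc : ∀ a b c : X, dist a b + dist b c = dist a c → 1 ≤ dist a b → 1 ≤ dist b c →
      C⁻¹ * G a b * G b c ≤ G a c ∧ G a c ≤ C * G a b * G b c)
    (hHar : ∀ a b c : X, 1 ≤ dist a b → 1 ≤ dist a c → G a b / G a c ≤ exp (D * dist b c))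
    (hC : 0 < C) (hD : 0 ≤ D) {a b q w : X} (hq : dist a q + dist q b = dist a b)
    (hwq : dist w q ≤ r) (hwa : r + 1 ≤ dist w a) (hwb : r + 1 ≤ dist w b) :
    MulComparable (C * exp (D * r) ^ 2) (G a b) (G a w * G w b) := by
  have haq : 1 ≤ dist a q := by
    have := dist_triangle w q a
    rw [dist_comm q a] at this
    linarith
  have hbq : 1 ≤ dist b q := by
    have := dist_triangle w q b
    rw [dist_comm q b] at this
    linarith
  have hr : 0 ≤ r := dist_nonneg.trans hwq
  have haw : 1 ≤ dist a w := by rw [dist_comm]; linarith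
  have hbw : 1 ≤ dist b w := by rw [dist_comm]; linarith
  have hqw : dist q w ≤ r := dist_comm q w ▸ hwq
  have hancona : MulComparable C (G a b) (G a q * G q b) := by
    simpa only [MulComparable, mul_assoc] using hAnc a q b hq haq (dist_comm q b ▸ hbq)
  have hharnack : MulComparable (exp (D * r) * exp (D * r)) (G a q * G q b) (G a w * G w b) := by
    rw [hsym q b, hsym w b]
    exact (mulComparable_of_harnack hpos hHar hD haq haw hqw).mul
      (mulComparable_of_harnack hpos hHar hD hbq hbw hqw) (exp_pos _).le (exp_pos _).le
      (hpos a w).le (hpos b w).le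
  simpa only [pow_two] using hancona.trans hharnack hC.le

end Kernel

theorem stmt12_general (C D r : ℝ) (hC : 1 ≤ C) (hD : 0 < D) :
    ∃ C' : ℝ, 0 < C' ∧
      ∀ (X : Type) [MetricSpace X], ∀ G : X → X → ℝ,
        (∀ a b, 0 < G a b) →
        (∀ a b, G a b = G b a) →
        (∀ a b c : X, dist a b + dist b c = dist a c → 1 ≤ dist a b → 1 ≤ dist b c →
          C⁻¹ * G a b * G b c ≤ G a c ∧ G a c ≤ C * G a b * G b c) →
        (∀ a b c : X, 1 ≤ dist a b → 1 ≤ dist a c →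
          G a b / G a c ≤ Real.exp (D * dist b c)) →
        ∀ x x' y y' w : X,
          (∃ q, dist x q + dist q y = dist x y ∧ dist w q ≤ r) →
          (∃ q, dist x' q + dist q y = dist x' y ∧ dist w q ≤ r) →
          (∃ q, dist x q + dist q y' = dist x y' ∧ dist w q ≤ r) →
          (∃ q, dist x' q + dist q y' = dist x' y' ∧ dist w q ≤ r) →
          r + 1 ≤ dist w x → r + 1 ≤ dist w x' → r + 1 ≤ dist w y → r + 1 ≤ dist w y' →
          C'⁻¹ ≤ G x y / G x' y / (G x y' / G x' y') ∧
            G x y / G x' y / (G x y' / G x' y') ≤ C' := by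
  have hC₀ : 0 < C := one_pos.trans_le hC
  refine ⟨(C * exp (D * r) ^ 2) ^ 4, by positivity, ?_⟩
  intro X _ G hpos hsym hAnc hHar x x' y y' w ⟨q₁, hq₁, hwq₁⟩ ⟨q₂, hq₂, hwq₂⟩ ⟨q₃, hq₃, hwq₃⟩
    ⟨q₄, hq₄, hwq₄⟩ hwx hwx' hwy hwy'
  have near := fun {a b q : X} =>
    mulComparable_of_near_geodesic (a := a) (b := b) (q := q) (w := w) (r := r)
      hpos hsym hAnc hHar hC₀ hD.le
  simpa only [MulComparable, mul_one] using
    MulComparable.crossRatio (near hq₁ hwq₁ hwx hwy) (near hq₂ hwq₂ hwx' hwy)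
      (near hq₃ hwq₃ hwx hwy') (near hq₄ hwq₄ hwx' hwy') (by positivity) (hpos x w) (hpos x' w)
      (hpos w y) (hpos w y')

/-- Ancona multiplicativity implies the ratio comparison: if a positive symmetric kernel `G` on
a geodesic metric space satisfies the two-sided Ancona inequality with constant `C` along
geodesics and the Harnack property `G(x,y)/G(x,z) ≤ e^{D·d(y,z)}`, then there is a constant
`C'` (depending only on `C`, `D` and `r`) such that whenever a point `w` lies within distance
`r` of geodesics `[x,y]`, `[x',y]`, `[x,y']`, `[x',y']` (and at distance `≥ r+1` from the four
endpoints), the cross-ratio `(G(x,y)/G(x',y)) / (G(x,y')/G(x',y'))` lies in `[C'⁻¹, C']`. -/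
theorem stmt12 (C D r : ℝ) (hC : 1 ≤ C) (hD : 0 < D) (hr : 0 < r) :
    ∃ C' : ℝ, 0 < C' ∧
      ∀ (X : Type) [MetricSpace X], ∀ G : X → X → ℝ,
        (∀ a b, 0 < G a b) →
        (∀ a b, G a b = G b a) →
        (∀ a b c : X, dist a b + dist b c = dist a c → 1 ≤ dist a b → 1 ≤ dist b c →
          C⁻¹ * G a b * G b c ≤ G a c ∧ G a c ≤ C * G a b * G b c) →
        (∀ a b c : X, 1 ≤ dist a b → 1 ≤ dist a c →
          G a b / G a c ≤ Real.exp (D * dist b c)) →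
        ∀ x x' y y' w : X,
          (∃ q, dist x q + dist q y = dist x y ∧ dist w q ≤ r) →
          (∃ q, dist x' q + dist q y = dist x' y ∧ dist w q ≤ r) →
          (∃ q, dist x q + dist q y' = dist x y' ∧ dist w q ≤ r) →
          (∃ q, dist x' q + dist q y' = dist x' y' ∧ dist w q ≤ r) →
          r + 1 ≤ dist w x → r + 1 ≤ dist w x' → r + 1 ≤ dist w y → r + 1 ≤ dist w y' →
          C'⁻¹ ≤ G x y / G x' y / (G x y' / G x' y') ∧
            G x y / G x' y / (G x y' / G x' y') ≤ C' :=
  stmt12_general C D r hC hD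
end
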